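/- arXiv:1807.10998 — 3 statements merged into one kernel-verified Lean document; each statement's English description precedes it below -/
import Mathlib

section
/- Let A be a finite subset of an abelian group and P ⊆ A - A. Then (∑_{x∈P} r_{A-A}(x))^8 ≤ |A|^8 · E_4^+(A) · E^+(P), where r_{A-A}(x) = #{(a,b)∈A×A : a-b=x}, E_4^+(A) = ∑_x r_{A-A}(x)^4, and E^+(P) = ∑_x r_{P-P}(x)^2. -/
open Pointwise

namespace Stmt6Aux

variable {G : Type*} [AddCommGroup G] [DecidableEq G]

lemma ind_mul_ind (p q : Prop) [Decidable p] [Decidable q] :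
    (if p then (1 : ℕ) else 0) * (if q then (1 : ℕ) else 0)
      = if p ∧ q then (1 : ℕ) else 0 := by
  by_cases hp : p <;> by_cases hq : q <;> simp [hp, hq]

lemma sum_mul_sum_prod {α β : Type*} (s : Finset α) (t : Finset β) (f : α → ℕ) (g : β → ℕ) :
    (∑ a ∈ s, f a) * (∑ b ∈ t, g b) = ∑ x ∈ s ×ˢ t, f x.1 * g x.2 := by
  rw [Finset.sum_mul_sum]
  exact (Finset.sum_product' s t fun a b => f a * g b).symm

/-- Cauchy–Schwarz with a pointwise hypothesis, ℕ version. -/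
lemma cs_nat {ι : Type*} (s : Finset ι) (T R C : ι → ℕ)
    (h : ∀ i ∈ s, T i ^ 2 ≤ R i ^ 2 * C i) :
    (∑ i ∈ s, T i) ^ 2 ≤ (∑ i ∈ s, R i ^ 2) * ∑ i ∈ s, C i := by
  have key : ((∑ i ∈ s, T i : ℕ) : ℝ) ^ 2 ≤
      ((∑ i ∈ s, R i ^ 2 : ℕ) : ℝ) * ((∑ i ∈ s, C i : ℕ) : ℝ) := by
    push_cast
    have h1 : ∀ i ∈ s, (T i : ℝ) ≤ (R i : ℝ) * Real.sqrt (C i) := by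
      intro i hi
      have hc : (0:ℝ) ≤ (C i : ℝ) := by positivity
      have h2 : (T i : ℝ) ^ 2 ≤ ((R i : ℝ) * Real.sqrt (C i)) ^ 2 := by
        rw [mul_pow, Real.sq_sqrt hc]
        exact_mod_cast h i hi
      calc (T i : ℝ) = Real.sqrt ((T i : ℝ) ^ 2) := (Real.sqrt_sq (by positivity)).symm
        _ ≤ Real.sqrt (((R i : ℝ) * Real.sqrt (C i)) ^ 2) := Real.sqrt_le_sqrt h2
        _ = (R i : ℝ) * Real.sqrt (C i) := Real.sqrt_sq (by positivity)
    calc (∑ i ∈ s, (T i : ℝ)) ^ 2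
        ≤ (∑ i ∈ s, (R i : ℝ) * Real.sqrt (C i)) ^ 2 := by
          have h0 : (0:ℝ) ≤ ∑ i ∈ s, (T i:ℝ) := by positivity
          exact pow_le_pow_left₀ h0 (Finset.sum_le_sum h1) 2
      _ ≤ (∑ i ∈ s, (R i : ℝ) ^ 2) * ∑ i ∈ s, Real.sqrt (C i) ^ 2 :=
          Finset.sum_mul_sq_le_sq_mul_sq s _ _
      _ = (∑ i ∈ s, (R i : ℝ) ^ 2) * ∑ i ∈ s, (C i : ℝ) := by
          apply congrArg
          exact Finset.sum_congr rfl fun i _ => Real.sq_sqrt (by positivity)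
  exact_mod_cast key

/-- plain Cauchy-Schwarz: square of a sum is at most card times sum of squares (ℕ). -/
lemma cs_nat' {ι : Type*} (s : Finset ι) (f : ι → ℕ) :
    (∑ i ∈ s, f i) ^ 2 ≤ s.card * ∑ i ∈ s, f i ^ 2 := by
  have := cs_nat s f f (fun _ => 1) (fun i _ => by simp)
  simpa [mul_comm] using this

/-- number of representations of `x` as a difference from `S`. -/
def rr (S : Finset G) (x : G) : ℕ := ((S ×ˢ S).filter fun q => q.1 - q.2 = x).card

def ff (A P : Finset G) (a : G) : ℕ := (A.filter fun b => a - b ∈ P).card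

def cc (A P : Finset G) (w : G × G) : ℕ :=
  (A.filter fun a => a - w.1 ∈ P ∧ a - w.2 ∈ P).card

def PP (P : Finset G) (z : G) : Finset G := P.filter fun p => p - z ∈ P

def gg (A : Finset G) (z p p' : G) : ℕ :=
  (A.filter fun b => b + z ∈ A ∧ b + p ∈ A ∧ b + p' ∈ A).card

lemma sum_r_eq (A P : Finset G) : ∑ x ∈ P, rr A x = ∑ a ∈ A, ff A P a := by
  unfold rr ff
  simp_rw [Finset.card_filter]
  rw [Finset.sum_comm, Finset.sum_product]
  refine Finset.sum_congr rfl fun a _ => ?_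
  refine Finset.sum_congr rfl fun b _ => ?_
  simp

lemma sum_f_sq (A P : Finset G) :
    ∑ a ∈ A, ff A P a ^ 2 = ∑ w ∈ A ×ˢ A, cc A P w := by
  unfold ff cc
  simp_rw [Finset.card_filter, sq, Finset.sum_mul_sum]
  rw [Finset.sum_product]
  rw [Finset.sum_comm]
  refine Finset.sum_congr rfl fun b _ => ?_
  rw [Finset.sum_comm]
  refine Finset.sum_congr rfl fun b' _ => ?_
  refine Finset.sum_congr rfl fun a _ => ?_
  exact ind_mul_ind _ _

lemma sum_c_sq (A P : Finset G) :
    ∑ w ∈ A ×ˢ A, cc A P w ^ 2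
      = ∑ z ∈ A - A, ∑ w ∈ (A ×ˢ A).filter (fun w => w.2 - w.1 = z), cc A P w ^ 2 :=
  (Finset.sum_fiberwise_of_maps_to (fun w hw => by
    rw [Finset.mem_product] at hw
    exact Finset.mem_sub.mpr ⟨w.2, hw.2, w.1, hw.1, rfl⟩) _).symm

lemma Tt_eq (A P : Finset G) (z : G) :
    ∑ w ∈ (A ×ˢ A).filter (fun w => w.2 - w.1 = z), cc A P w ^ 2
      = ∑ q ∈ PP P z ×ˢ PP P z, gg A z q.1 q.2 := by
  have e1 : ∑ w ∈ (A ×ˢ A).filter (fun w => w.2 - w.1 = z), cc A P w ^ 2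
      = ∑ b ∈ A.filter (fun b => b + z ∈ A), cc A P (b, b + z) ^ 2 := by
    refine Finset.sum_nbij' (i := fun w => w.1) (j := fun b => (b, b + z)) ?_ ?_ ?_ ?_ ?_
    · intro w hw
      simp only [Finset.mem_filter, Finset.mem_product] at hw ⊢
      obtain ⟨⟨h1, h2⟩, h3⟩ := hw
      refine ⟨h1, ?_⟩
      have hw2 : w.2 = w.1 + z := by rw [← h3]; abel
      rwa [← hw2]
    · intro b hb
      simp only [Finset.mem_filter, Finset.mem_product] at hb ⊢
      refine ⟨⟨hb.1, hb.2⟩, ?_⟩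
      show b + z - b = z
      abel
    · intro w hw
      simp only [Finset.mem_filter, Finset.mem_product] at hw
      have hw2 : w.2 = w.1 + z := by rw [← hw.2]; abel
      show (w.1, w.1 + z) = w
      rw [← hw2]
    · intro b _; rfl
    · intro w hw
      simp only [Finset.mem_filter, Finset.mem_product] at hw
      have hw2 : w.2 = w.1 + z := by rw [← hw.2]; abel
      show cc A P w ^ 2 = cc A P (w.1, w.1 + z) ^ 2
      rw [← hw2]
  rw [e1]
  have e2 : ∀ b ∈ A.filter (fun b => b + z ∈ A),
      cc A P (b, b + z) = ∑ p ∈ PP P z, if b + p ∈ A then 1 else 0 := by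
    intro b hb
    rw [← Finset.card_filter]
    unfold cc PP
    refine Finset.card_nbij' (i := fun a => a - b) (j := fun p => b + p) ?_ ?_ ?_ ?_
    · intro a ha
      simp only [Finset.mem_coe, Finset.mem_filter] at ha ⊢
      obtain ⟨haA, h1, h2⟩ := ha
      refine ⟨⟨h1, ?_⟩, ?_⟩
      · have h : a - b - z = a - (b + z) := by abel
        rw [h]; exact h2
      · have h : b + (a - b) = a := by abel
        rw [h]; exact haA
    · intro p hp
      simp only [Finset.mem_coe, Finset.mem_filter] at hp ⊢
      obtain ⟨⟨hpP, hpz⟩, hbA⟩ := hp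
      refine ⟨hbA, ?_, ?_⟩
      · have h : b + p - b = p := by abel
        rw [h]; exact hpP
      · have h : b + p - (b + z) = p - z := by abel
        rw [h]; exact hpz
    · intro a _
      show b + (a - b) = a
      abel
    · intro p _
      show b + p - b = p
      abel
  calc ∑ b ∈ A.filter (fun b => b + z ∈ A), cc A P (b, b + z) ^ 2
      = ∑ b ∈ A.filter (fun b => b + z ∈ A), ∑ p ∈ PP P z, ∑ p' ∈ PP P z,
          ((if b + p ∈ A then 1 else 0) * if b + p' ∈ A then 1 else 0) := by
        refine Finset.sum_congr rfl fun b hb => ?_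
        rw [e2 b hb, sq, Finset.sum_mul_sum]
    _ = ∑ p ∈ PP P z, ∑ p' ∈ PP P z, ∑ b ∈ A.filter (fun b => b + z ∈ A),
          ((if b + p ∈ A then 1 else 0) * if b + p' ∈ A then 1 else 0) := by
        rw [Finset.sum_comm]
        refine Finset.sum_congr rfl fun p _ => ?_
        rw [Finset.sum_comm]
    _ = ∑ q ∈ PP P z ×ˢ PP P z, gg A z q.1 q.2 := by
        rw [Finset.sum_product]
        refine Finset.sum_congr rfl fun p _ => ?_
        refine Finset.sum_congr rfl fun p' _ => ?_
        unfold gg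
        rw [Finset.card_filter, Finset.sum_filter]
        refine Finset.sum_congr rfl fun b _ => ?_
        by_cases h1 : b + z ∈ A <;> by_cases h2 : b + p ∈ A <;>
          by_cases h3 : b + p' ∈ A <;> simp [h1, h2, h3]

lemma card_PP (P : Finset G) (z : G) : (PP P z).card = rr P z := by
  unfold PP rr
  refine Finset.card_nbij' (i := fun p => (p, p - z)) (j := fun q => q.1) ?_ ?_ ?_ ?_
  · intro p hp
    simp only [Finset.mem_coe, Finset.mem_filter] at hp
    simp only [Finset.mem_coe, Finset.mem_filter, Finset.mem_product]
    refine ⟨⟨hp.1, hp.2⟩, ?_⟩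
    show p - (p - z) = z
    abel
  · intro q hq
    simp only [Finset.mem_coe, Finset.mem_filter, Finset.mem_product] at hq
    simp only [Finset.mem_coe, Finset.mem_filter]
    obtain ⟨⟨h1, h2⟩, h3⟩ := hq
    refine ⟨h1, ?_⟩
    have h : q.1 - z = q.2 := by rw [← h3]; abel
    rw [h]; exact h2
  · intro p _; rfl
  · intro q hq
    simp only [Finset.mem_coe, Finset.mem_filter, Finset.mem_product] at hq
    have h : q.1 - z = q.2 := by rw [← hq.2]; abel
    show (q.1, q.1 - z) = q
    rw [h]

lemma inj_step (A P : Finset G) :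
    ∑ z ∈ A - A, ∑ q ∈ PP P z ×ˢ PP P z, gg A z q.1 q.2 ^ 2
      ≤ ∑ x ∈ A - A, rr A x ^ 4 := by
  set L : Finset (G × (G × G) × (G × G)) :=
    ((A - A) ×ˢ (P ×ˢ P) ×ˢ (A ×ˢ A)).filter
      (fun x => (x.2.1.1 - x.1 ∈ P ∧ x.2.1.2 - x.1 ∈ P) ∧
        ((x.2.2.1 + x.1 ∈ A ∧ x.2.2.1 + x.2.1.1 ∈ A ∧ x.2.2.1 + x.2.1.2 ∈ A) ∧
         (x.2.2.2 + x.1 ∈ A ∧ x.2.2.2 + x.2.1.1 ∈ A ∧ x.2.2.2 + x.2.1.2 ∈ A))) with hLdef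
  set R : Finset (G × (G × G) × (G × G) × (G × G) × (G × G)) :=
    ((A - A) ×ˢ (A ×ˢ A) ×ˢ (A ×ˢ A) ×ˢ (A ×ˢ A) ×ˢ (A ×ˢ A)).filter
      (fun y => y.2.1.1 - y.2.1.2 = y.1 ∧ y.2.2.1.1 - y.2.2.1.2 = y.1 ∧
        y.2.2.2.1.1 - y.2.2.2.1.2 = y.1 ∧ y.2.2.2.2.1 - y.2.2.2.2.2 = y.1) with hRdef
  have hgg : ∀ (z p p' : G), gg A z p p' ^ 2 = ∑ w ∈ A ×ˢ A,
      (if (w.1 + z ∈ A ∧ w.1 + p ∈ A ∧ w.1 + p' ∈ A) ∧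
          (w.2 + z ∈ A ∧ w.2 + p ∈ A ∧ w.2 + p' ∈ A) then 1 else 0) := by
    intro z p p'
    rw [sq]
    unfold gg
    rw [Finset.card_filter, Finset.sum_mul_sum, Finset.sum_product]
    refine Finset.sum_congr rfl fun b _ => ?_
    refine Finset.sum_congr rfl fun c _ => ?_
    exact ind_mul_ind _ _
  have hLcard : ∑ z ∈ A - A, ∑ q ∈ PP P z ×ˢ PP P z, gg A z q.1 q.2 ^ 2 = L.card := by
    rw [hLdef, Finset.card_filter]
    conv_rhs => rw [Finset.sum_product]
    refine Finset.sum_congr rfl fun z _ => ?_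
    conv_rhs => rw [Finset.sum_product]
    have hPP : PP P z ×ˢ PP P z
        = (P ×ˢ P).filter (fun q => q.1 - z ∈ P ∧ q.2 - z ∈ P) := by
      ext q
      simp only [PP, Finset.mem_filter, Finset.mem_product]
      tauto
    conv_lhs => rw [hPP, Finset.sum_filter]
    refine Finset.sum_congr rfl fun q _ => ?_
    by_cases h : q.1 - z ∈ P ∧ q.2 - z ∈ P
    · rw [if_pos h, hgg]
      refine Finset.sum_congr rfl fun w _ => ?_
      simp [h.1, h.2]
    · rw [if_neg h]
      refine (Finset.sum_eq_zero fun w _ => ?_).symm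
      rw [if_neg]
      exact fun hc => h hc.1
  have hr4 : ∀ x : G, rr A x ^ 4
      = ∑ v ∈ (A ×ˢ A) ×ˢ (A ×ˢ A) ×ˢ (A ×ˢ A) ×ˢ (A ×ˢ A),
          (if v.1.1 - v.1.2 = x ∧ v.2.1.1 - v.2.1.2 = x ∧ v.2.2.1.1 - v.2.2.1.2 = x ∧
              v.2.2.2.1 - v.2.2.2.2 = x then 1 else 0) := by
    intro x
    have hu : rr A x = ∑ q ∈ A ×ˢ A, (if q.1 - q.2 = x then (1:ℕ) else 0) := by
      unfold rr; rw [Finset.card_filter]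
    have e4 : rr A x ^ 4 = rr A x * (rr A x * (rr A x * rr A x)) := by ring
    rw [e4, hu, sum_mul_sum_prod, sum_mul_sum_prod, sum_mul_sum_prod]
    refine Finset.sum_congr rfl fun v _ => ?_
    simp only [ind_mul_ind]
  have hRcard : ∑ x ∈ A - A, rr A x ^ 4 = R.card := by
    rw [hRdef, Finset.card_filter, Finset.sum_product]
    exact Finset.sum_congr rfl fun x _ => hr4 x
  rw [hLcard, hRcard]
  refine Finset.card_le_card_of_injOn
    (fun x => (x.2.2.1 - x.2.2.2, (x.2.2.1, x.2.2.2), (x.2.2.1 + x.1, x.2.2.2 + x.1),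
      (x.2.2.1 + x.2.1.1, x.2.2.2 + x.2.1.1), (x.2.2.1 + x.2.1.2, x.2.2.2 + x.2.1.2))) ?_ ?_
  · intro x hx
    rw [hLdef] at hx
    rw [hRdef]
    simp only [Finset.mem_coe, Finset.mem_filter, Finset.mem_product] at hx ⊢
    obtain ⟨⟨hz, ⟨hp, hp'⟩, hb, hc⟩, ⟨g1, g2⟩, ⟨g3, g4, g5⟩, g6, g7, g8⟩ := hx
    refine ⟨⟨?_, ⟨hb, hc⟩, ⟨g3, g6⟩, ⟨g4, g7⟩, ⟨g5, g8⟩⟩, trivial, ?_, ?_, ?_⟩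
    · exact Finset.mem_sub.mpr ⟨_, hb, _, hc, rfl⟩
    · abel
    · abel
    · abel
  · rintro ⟨xz, ⟨xp, xp'⟩, ⟨xb, xc⟩⟩ _ ⟨yz, ⟨yp, yp'⟩, ⟨yb, yc⟩⟩ _ hxy
    simp only [Prod.mk.injEq] at hxy
    obtain ⟨-, ⟨hb, hc⟩, ⟨e4, -⟩, ⟨e6, -⟩, ⟨e8, -⟩⟩ := hxy
    subst hb; subst hc
    have hz : xz = yz := add_left_cancel e4
    have hp : xp = yp := add_left_cancel e6
    have hp' : xp' = yp' := add_left_cancel e8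
    subst hz; subst hp; subst hp'
    rfl

lemma supp_step (A P : Finset G) :
    ∑ z ∈ A - A, rr P z ^ 2 ≤ ∑ x ∈ P - P, rr P x ^ 2 := by
  rw [← Finset.sum_filter_ne_zero (A - A)]
  apply Finset.sum_le_sum_of_subset
  intro z hz
  simp only [Finset.mem_filter] at hz
  obtain ⟨-, hne⟩ := hz
  have h0 : rr P z ≠ 0 := by
    intro h; apply hne; rw [h]; rfl
  unfold rr at h0
  obtain ⟨q, hq⟩ := Finset.card_pos.mp (Nat.pos_of_ne_zero h0)
  simp only [Finset.mem_filter, Finset.mem_product] at hq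
  exact Finset.mem_sub.mpr ⟨q.1, hq.1.1, q.2, hq.1.2, hq.2⟩

end Stmt6Aux

theorem stmt_6 {G : Type*} [AddCommGroup G] [DecidableEq G]
    (A : Finset G) (hA : A.Nonempty) (P : Finset G) (hP : P ⊆ A - A) :
    (∑ x ∈ P, ((A ×ˢ A).filter (fun q => q.1 - q.2 = x)).card) ^ 8 ≤
      A.card ^ 8 *
        (∑ x ∈ A - A, ((A ×ˢ A).filter (fun q => q.1 - q.2 = x)).card ^ 4) *
        (∑ x ∈ P - P, ((P ×ˢ P).filter (fun q => q.1 - q.2 = x)).card ^ 2) := by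
  show (∑ x ∈ P, Stmt6Aux.rr A x) ^ 8 ≤
      A.card ^ 8 * (∑ x ∈ A - A, Stmt6Aux.rr A x ^ 4) * (∑ x ∈ P - P, Stmt6Aux.rr P x ^ 2)
  set σ := ∑ x ∈ P, Stmt6Aux.rr A x with hσ
  set S := ∑ a ∈ A, Stmt6Aux.ff A P a ^ 2 with hS
  set V := ∑ w ∈ A ×ˢ A, Stmt6Aux.cc A P w ^ 2 with hV
  set E4 := ∑ x ∈ A - A, Stmt6Aux.rr A x ^ 4 with hE4
  set EP := ∑ x ∈ P - P, Stmt6Aux.rr P x ^ 2 with hEP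
  have S1 : σ ^ 2 ≤ A.card * S := by
    rw [hσ, Stmt6Aux.sum_r_eq A P]
    exact Stmt6Aux.cs_nat' A _
  have S2 : S ^ 2 ≤ A.card ^ 2 * V := by
    rw [hS, Stmt6Aux.sum_f_sq A P]
    have := Stmt6Aux.cs_nat' (A ×ˢ A) (Stmt6Aux.cc A P)
    rwa [Finset.card_product, ← sq] at this
  have S3 : V ^ 2 ≤ EP * E4 := by
    rw [hV, Stmt6Aux.sum_c_sq A P]
    have pointwise : ∀ z ∈ A - A,
        (∑ w ∈ (A ×ˢ A).filter (fun w => w.2 - w.1 = z), Stmt6Aux.cc A P w ^ 2) ^ 2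
          ≤ Stmt6Aux.rr P z ^ 2 *
            ∑ q ∈ Stmt6Aux.PP P z ×ˢ Stmt6Aux.PP P z, Stmt6Aux.gg A z q.1 q.2 ^ 2 := by
      intro z _
      rw [Stmt6Aux.Tt_eq A P z]
      have := Stmt6Aux.cs_nat' (Stmt6Aux.PP P z ×ˢ Stmt6Aux.PP P z)
        (fun q => Stmt6Aux.gg A z q.1 q.2)
      rwa [Finset.card_product, Stmt6Aux.card_PP, ← sq] at this
    have cs := Stmt6Aux.cs_nat (A - A)
      (fun z => ∑ w ∈ (A ×ˢ A).filter (fun w => w.2 - w.1 = z), Stmt6Aux.cc A P w ^ 2)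
      (Stmt6Aux.rr P)
      (fun z => ∑ q ∈ Stmt6Aux.PP P z ×ˢ Stmt6Aux.PP P z, Stmt6Aux.gg A z q.1 q.2 ^ 2)
      pointwise
    refine cs.trans (Nat.mul_le_mul ?_ ?_)
    · exact Stmt6Aux.supp_step A P
    · exact Stmt6Aux.inj_step A P
  calc σ ^ 8 = (σ ^ 2) ^ 4 := by ring
    _ ≤ (A.card * S) ^ 4 := Nat.pow_le_pow_left S1 4
    _ = A.card ^ 4 * (S ^ 2) ^ 2 := by ring
    _ ≤ A.card ^ 4 * (A.card ^ 2 * V) ^ 2 :=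
        Nat.mul_le_mul_left _ (Nat.pow_le_pow_left S2 2)
    _ = A.card ^ 8 * V ^ 2 := by ring
    _ ≤ A.card ^ 8 * (EP * E4) := Nat.mul_le_mul_left _ S3
    _ = A.card ^ 8 * E4 * EP := by ring
end

section
/- Let A be a finite subset of an abelian group and P ⊆ A + A. Then (∑_{x∈P} r_{A+A}(x))^8 ≤ |A|^8 · E_4^+(A) · E^+(P), where r_{A+A}(x) = #{(a,b)∈A×A : a+b=x}, E_4^+(A) = ∑_x r_{A-A}(x)^4, and E^+(P) is the additive energy of P. -/
open Pointwise

namespace Stmt7Aux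

variable {α β : Type*}

lemma card_filter_product (s : Finset α) (t : Finset β) (p : α × β → Prop) [DecidablePred p] :
    ((s ×ˢ t).filter p).card = ∑ a ∈ s, (t.filter fun b => p (a, b)).card := by
  simp_rw [Finset.card_filter]
  exact Finset.sum_product _ _ _

lemma nat_cs {ι : Type*} (s : Finset ι) (f g : ι → ℕ) :
    (∑ i ∈ s, f i * g i) ^ 2 ≤ (∑ i ∈ s, f i ^ 2) * ∑ i ∈ s, g i ^ 2 :=
  Finset.sum_mul_sq_le_sq_mul_sq s f g

lemma nat_cs_one {ι : Type*} (s : Finset ι) (f : ι → ℕ) :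
    (∑ i ∈ s, f i) ^ 2 ≤ s.card * ∑ i ∈ s, f i ^ 2 := by
  have h := nat_cs s (fun _ => 1) f
  simpa using h

end Stmt7Aux

open Stmt7Aux

set_option maxRecDepth 40000 in
theorem stmt_7 {G : Type*} [AddCommGroup G] [DecidableEq G]
    (A : Finset G) (hA : A.Nonempty) (P : Finset G) (hP : P ⊆ A + A) :
    (∑ x ∈ P, ((A ×ˢ A).filter (fun q => q.1 + q.2 = x)).card) ^ 8 ≤
      A.card ^ 8 *
        (∑ x ∈ A - A, ((A ×ˢ A).filter (fun q => q.1 - q.2 = x)).card ^ 4) *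
        (∑ x ∈ P - P, ((P ×ˢ P).filter (fun q => q.1 - q.2 = x)).card ^ 2) := by
  set σ : ℕ := ∑ x ∈ P, ((A ×ˢ A).filter (fun q => q.1 + q.2 = x)).card with hσ
  set E4 : ℕ := ∑ x ∈ A - A, ((A ×ˢ A).filter (fun q => q.1 - q.2 = x)).card ^ 4 with hE4
  set E2 : ℕ := ∑ x ∈ P - P, ((P ×ˢ P).filter (fun q => q.1 - q.2 = x)).card ^ 2 with hE2
  set f : G → ℕ := fun a => (A.filter (fun b => a + b ∈ P)).card with hf
  set w : G × G → ℕ := fun z => (A.filter (fun a => a + z.1 ∈ P ∧ a + z.2 ∈ P)).card with hw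
  set J : Finset (G × G × G) := P ×ˢ ((A - A) ×ˢ (A - A)) with hJ
  set J' : Finset (G × G × G) := (A + A) ×ˢ ((A - A) ×ˢ (A - A)) with hJ'
  set c : G × G × G → ℕ := fun j =>
    ((A ×ˢ A).filter (fun q => q.1 + q.2 = j.1 ∧ q.1 - j.2.1 ∈ A ∧ q.2 + j.2.2 ∈ A)).card with hc
  set X : G × G × G → Prop := fun j =>
    j.1 ∈ P ∧ j.1 + j.2.2 ∈ P ∧ j.1 - j.2.1 ∈ P ∧ j.1 - j.2.1 + j.2.2 ∈ P with hX
  have instX : DecidablePred X := fun j => by rw [hX]; infer_instance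
  -- Step 1 : σ = ∑ a ∈ A, f a
  have step1 : σ = ∑ a ∈ A, f a := by
    calc σ = ∑ x ∈ P, ∑ q ∈ A ×ˢ A, if q.1 + q.2 = x then 1 else 0 := by
            rw [hσ]
            exact Finset.sum_congr rfl fun x _ => Finset.card_filter _ _
      _ = ∑ q ∈ A ×ˢ A, ∑ x ∈ P, if q.1 + q.2 = x then 1 else 0 := Finset.sum_comm
      _ = ∑ q ∈ A ×ˢ A, if q.1 + q.2 ∈ P then 1 else 0 := by
            refine Finset.sum_congr rfl fun q _ => ?_
            rw [Finset.sum_ite_eq]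
      _ = ∑ a ∈ A, ∑ b ∈ A, if a + b ∈ P then 1 else 0 := Finset.sum_product _ _ _
      _ = ∑ a ∈ A, f a := by
            refine Finset.sum_congr rfl fun a _ => ?_
            rw [hf]
            exact (Finset.card_filter _ _).symm
  -- Step 3 : ∑ f² = ∑ over A ×ˢ A of w
  have step3 : ∑ a ∈ A, f a ^ 2 = ∑ z ∈ A ×ˢ A, w z := by
    have hfz : ∀ a, f a ^ 2 = ∑ z ∈ A ×ˢ A, ((if a + z.1 ∈ P then 1 else 0) *
        (if a + z.2 ∈ P then 1 else 0)) := by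
      intro a
      rw [sq, hf]
      simp only [Finset.card_filter]
      rw [Finset.sum_mul_sum A A (fun b => if a + b ∈ P then (1:ℕ) else 0)
        (fun b => if a + b ∈ P then (1:ℕ) else 0)]
      exact (Finset.sum_product A A (fun z => (if a + z.1 ∈ P then (1:ℕ) else 0) *
        (if a + z.2 ∈ P then (1:ℕ) else 0))).symm
    calc ∑ a ∈ A, f a ^ 2
        = ∑ a ∈ A, ∑ z ∈ A ×ˢ A, ((if a + z.1 ∈ P then 1 else 0) *
            (if a + z.2 ∈ P then 1 else 0)) := Finset.sum_congr rfl fun a _ => hfz a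
      _ = ∑ z ∈ A ×ˢ A, ∑ a ∈ A, ((if a + z.1 ∈ P then 1 else 0) *
            (if a + z.2 ∈ P then 1 else 0)) := Finset.sum_comm
      _ = ∑ z ∈ A ×ˢ A, w z := by
            refine Finset.sum_congr rfl fun z _ => ?_
            rw [hw]
            simp only [Finset.card_filter]
            refine Finset.sum_congr rfl fun a _ => ?_
            by_cases h1 : a + z.1 ∈ P <;> by_cases h2 : a + z.2 ∈ P <;> simp [h1, h2]
  -- Step 5 : ∑ w² = ∑ j ∈ J.filter X, c j
  have step5 : ∑ z ∈ A ×ˢ A, w z ^ 2 = ∑ j ∈ J.filter X, c j := by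
    have hL : ∑ z ∈ A ×ˢ A, w z ^ 2 =
        (((A ×ˢ A) ×ˢ (A ×ˢ A)).filter (fun x : (G × G) × G × G =>
          (x.2.1 + x.1.1 ∈ P ∧ x.2.1 + x.1.2 ∈ P) ∧
          (x.2.2 + x.1.1 ∈ P ∧ x.2.2 + x.1.2 ∈ P))).card := by
      rw [card_filter_product]
      refine Finset.sum_congr rfl fun z _ => ?_
      rw [Finset.filter_product (fun a => a + z.1 ∈ P ∧ a + z.2 ∈ P)
        (fun a => a + z.1 ∈ P ∧ a + z.2 ∈ P), Finset.card_product]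
      rw [hw, sq]
    have hR : ∑ j ∈ J.filter X, c j =
        (((J.filter X) ×ˢ (A ×ˢ A)).filter (fun x : (G × G × G) × G × G =>
          x.2.1 + x.2.2 = x.1.1 ∧ x.2.1 - x.1.2.1 ∈ A ∧ x.2.2 + x.1.2.2 ∈ A)).card := by
      rw [card_filter_product]
    rw [hL, hR]
    refine Finset.card_nbij'
      (fun x => ((x.2.1 + x.1.1, (x.2.1 - x.2.2, x.1.2 - x.1.1)), (x.2.1, x.1.1)))
      (fun y => ((y.2.2, y.2.2 + y.1.2.2), (y.2.1, y.2.1 - y.1.2.1)))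
      ?_ ?_ ?_ ?_
    · rintro ⟨⟨b, c'⟩, a, a'⟩ (hx : _ ∈ (_ : Finset _))
      simp only [Finset.mem_filter, Finset.mem_product] at hx
      obtain ⟨⟨⟨hb, hc'⟩, ha, ha'⟩, ⟨h1, h2⟩, h3, h4⟩ := hx
      have m1 : a - a' ∈ A - A := Finset.sub_mem_sub ha ha'
      have m2 : c' - b ∈ A - A := Finset.sub_mem_sub hc' hb
      have m3 : a + b + (c' - b) ∈ P := by
        have e : a + b + (c' - b) = a + c' := by abel
        rw [e]; exact h2
      have m4 : a + b - (a - a') ∈ P := by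
        have e : a + b - (a - a') = a' + b := by abel
        rw [e]; exact h3
      have m5 : a + b - (a - a') + (c' - b) ∈ P := by
        have e : a + b - (a - a') + (c' - b) = a' + c' := by abel
        rw [e]; exact h4
      have m6 : a - (a - a') ∈ A := by
        have e : a - (a - a') = a' := by abel
        rw [e]; exact ha'
      have m7 : b + (c' - b) ∈ A := by
        have e : b + (c' - b) = c' := by abel
        rw [e]; exact hc'
      simp only [Finset.mem_coe, Finset.mem_filter, Finset.mem_product, hJ, hX]
      and_intros <;> first | rfl | trivial | assumption
    · rintro ⟨⟨s, d, e⟩, a, b⟩ (hy : _ ∈ (_ : Finset _))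
      simp only [Finset.mem_filter, Finset.mem_product, hJ, hX] at hy
      obtain ⟨⟨⟨⟨hs, hd, he⟩, hXs, hXse, hXsd, hXsde⟩, ha, hb⟩, hab, had, hbe⟩ := hy
      have m1 : a + b ∈ P := by rw [hab]; exact hXs
      have m2 : a + (b + e) ∈ P := by
        have e1 : a + (b + e) = a + b + e := by abel
        rw [e1, hab]; exact hXse
      have m3 : a - d + b ∈ P := by
        have e1 : a - d + b = a + b - d := by abel
        rw [e1, hab]; exact hXsd
      have m4 : a - d + (b + e) ∈ P := by
        have e1 : a - d + (b + e) = a + b - d + e := by abel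
        rw [e1, hab]; exact hXsde
      simp only [Finset.mem_coe, Finset.mem_filter, Finset.mem_product]
      and_intros <;> first | trivial | assumption
    · rintro ⟨⟨b, c'⟩, a, a'⟩ hx
      simp only [Prod.mk.injEq]
      and_intros <;> first | rfl | trivial | abel
    · rintro ⟨⟨s, d, e⟩, a, b⟩ (hy : _ ∈ (_ : Finset _))
      simp only [Finset.mem_filter, Finset.mem_product] at hy
      obtain ⟨⟨⟨-, -⟩, -, -⟩, hab, -, -⟩ := hy
      simp only [Prod.mk.injEq]
      and_intros <;> first | rfl | trivial | exact hab | abel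
  -- Step 7 : ∑ χ ≤ E2
  have step7 : (J.filter X).card ≤ E2 := by
    have hE2card : E2 = (((P - P) ×ˢ ((P ×ˢ P) ×ˢ (P ×ˢ P))).filter
        (fun y : G × (G × G) × G × G =>
          y.2.1.1 - y.2.1.2 = y.1 ∧ y.2.2.1 - y.2.2.2 = y.1)).card := by
      rw [hE2, card_filter_product]
      refine Finset.sum_congr rfl fun x _ => ?_
      rw [Finset.filter_product (fun q : G × G => q.1 - q.2 = x) (fun q : G × G => q.1 - q.2 = x),
        Finset.card_product, sq]
    rw [hE2card]
    refine Finset.card_le_card_of_injOn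
      (fun j => (j.2.1, ((j.1, j.1 - j.2.1), (j.1 + j.2.2, j.1 - j.2.1 + j.2.2)))) ?_ ?_
    · rintro ⟨s, d, e⟩ (hj : _ ∈ (_ : Finset _))
      simp only [Finset.mem_filter, Finset.mem_product, hJ, hX] at hj
      obtain ⟨⟨hs, hd, he⟩, hXs, hXse, hXsd, hXsde⟩ := hj
      have h1 : s - (s - d) = d := by abel
      have m1 : d ∈ P - P := by rw [← h1]; exact Finset.sub_mem_sub hXs hXsd
      have h2 : s + e - (s - d + e) = d := by abel
      simp only [Finset.mem_coe, Finset.mem_filter, Finset.mem_product]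
      and_intros <;> first | exact h1 | exact h2 | assumption
    · rintro ⟨s1, d1, e1⟩ h1 ⟨s2, d2, e2⟩ h2 h
      simp only [Prod.mk.injEq] at h
      obtain ⟨hd, ⟨hs, -⟩, hse, -⟩ := h
      have he : e1 = e2 := by
        have : s1 + e1 = s1 + e2 := by rw [hse, hs]
        exact add_left_cancel this
      simp only [Prod.mk.injEq]
      exact ⟨hs, hd, he⟩
  -- Step 8 : ∑ c² ≤ E4
  have step8 : ∑ j ∈ J, c j ^ 2 ≤ E4 := by
    have hsub : J ⊆ J' := by
      rw [hJ, hJ']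
      exact Finset.product_subset_product hP (Finset.Subset.refl _)
    have h1 : ∑ j ∈ J, c j ^ 2 ≤ ∑ j ∈ J', c j ^ 2 :=
      Finset.sum_le_sum_of_subset hsub
    have h2 : ∑ j ∈ J', c j ^ 2 = E4 := by
      have hLcard : ∑ j ∈ J', c j ^ 2 =
          ((J' ×ˢ ((A ×ˢ A) ×ˢ (A ×ˢ A))).filter
            (fun x : (G × G × G) × (G × G) × G × G =>
              (x.2.1.1 + x.2.1.2 = x.1.1 ∧ x.2.1.1 - x.1.2.1 ∈ A ∧ x.2.1.2 + x.1.2.2 ∈ A) ∧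
              (x.2.2.1 + x.2.2.2 = x.1.1 ∧ x.2.2.1 - x.1.2.1 ∈ A ∧ x.2.2.2 + x.1.2.2 ∈ A))).card := by
        rw [card_filter_product]
        refine Finset.sum_congr rfl fun j _ => ?_
        rw [Finset.filter_product
          (fun q : G × G => q.1 + q.2 = j.1 ∧ q.1 - j.2.1 ∈ A ∧ q.2 + j.2.2 ∈ A)
          (fun q : G × G => q.1 + q.2 = j.1 ∧ q.1 - j.2.1 ∈ A ∧ q.2 + j.2.2 ∈ A),
          Finset.card_product, hc, sq]
      have hRcard : E4 = (((A - A) ×ˢ (((A ×ˢ A) ×ˢ (A ×ˢ A)) ×ˢ ((A ×ˢ A) ×ˢ (A ×ˢ A)))).filter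
          (fun y : G × ((G × G) × G × G) × (G × G) × G × G =>
            ((y.2.1.1.1 - y.2.1.1.2 = y.1 ∧ y.2.1.2.1 - y.2.1.2.2 = y.1) ∧
             (y.2.2.1.1 - y.2.2.1.2 = y.1 ∧ y.2.2.2.1 - y.2.2.2.2 = y.1)))).card := by
        rw [hE4, card_filter_product]
        refine Finset.sum_congr rfl fun x _ => ?_
        rw [Finset.filter_product
          (fun z : (G × G) × G × G => z.1.1 - z.1.2 = x ∧ z.2.1 - z.2.2 = x)
          (fun z : (G × G) × G × G => z.1.1 - z.1.2 = x ∧ z.2.1 - z.2.2 = x),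
          Finset.card_product,
          Finset.filter_product (fun q : G × G => q.1 - q.2 = x) (fun q : G × G => q.1 - q.2 = x),
          Finset.card_product]
        ring
      rw [hLcard, hRcard]
      refine Finset.card_nbij'
        (fun x => (x.2.1.1 - x.2.2.1,
          (((x.2.1.1, x.2.2.1), (x.2.1.1 - x.1.2.1, x.2.2.1 - x.1.2.1)),
           ((x.2.2.2, x.2.1.2), (x.2.2.2 + x.1.2.2, x.2.1.2 + x.1.2.2)))))
        (fun y => ((y.2.1.1.1 + y.2.2.1.2,
          (y.2.1.1.1 - y.2.1.2.1, y.2.2.2.2 - y.2.2.1.2)),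
          ((y.2.1.1.1, y.2.2.1.2), (y.2.1.1.2, y.2.2.1.1))))
        ?_ ?_ ?_ ?_
      · rintro ⟨⟨s, d, e⟩, ⟨a, b⟩, a2, b2⟩ (hx : _ ∈ (_ : Finset _))
        simp only [Finset.mem_filter, Finset.mem_product, hJ'] at hx
        obtain ⟨⟨⟨hsA, hdA, heA⟩, ⟨ha, hb⟩, ha2, hb2⟩,
          ⟨hab, had, hbe⟩, hab2, had2, hbe2⟩ := hx
        have key : b2 - b = a - a2 := by
          have h : a + b = a2 + b2 := by rw [hab, hab2]
          have h' : b2 - b = a2 + b2 - (a2 + b) := by abel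
          rw [h', ← h]; abel
        have m1 : a - a2 ∈ A - A := Finset.sub_mem_sub ha ha2
        have k2 : a - d - (a2 - d) = a - a2 := by abel
        have k4 : b2 + e - (b + e) = a - a2 := by
          have e1 : b2 + e - (b + e) = b2 - b := by abel
          rw [e1]; exact key
        simp only [Finset.mem_coe, Finset.mem_filter, Finset.mem_product]
        and_intros <;> first | rfl | trivial | exact key | exact k2 | exact k4 | assumption
      · rintro ⟨x, ⟨⟨u1, v1⟩, u2, v2⟩, ⟨u3, v3⟩, u4, v4⟩ (hy : _ ∈ (_ : Finset _))
        simp only [Finset.mem_filter, Finset.mem_product] at hy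
        obtain ⟨⟨hxA, ⟨⟨hu1, hv1⟩, hu2, hv2⟩, ⟨hu3, hv3⟩, hu4, hv4⟩,
          ⟨hq1, hq2⟩, hq3, hq4⟩ := hy
        have m0 : u1 + v3 ∈ A + A := Finset.add_mem_add hu1 hv3
        have m1 : u1 - u2 ∈ A - A := Finset.sub_mem_sub hu1 hu2
        have m2 : v4 - v3 ∈ A - A := Finset.sub_mem_sub hv4 hv3
        have e2 : u1 - (u1 - u2) ∈ A := by
          have e : u1 - (u1 - u2) = u2 := by abel
          rw [e]; exact hu2
        have e3 : v3 + (v4 - v3) ∈ A := by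
          have e : v3 + (v4 - v3) = v4 := by abel
          rw [e]; exact hv4
        have e4 : v1 - (u1 - u2) ∈ A := by
          have h' : v1 - (u1 - u2) = u2 - (u1 - v1) := by abel
          rw [h', hq1, ← hq2]
          have e : u2 - (u2 - v2) = v2 := by abel
          rw [e]; exact hv2
        have e5 : v1 + u3 = u1 + v3 := by
          have h' : v1 + u3 = u1 + v3 + (u3 - v3) - (u1 - v1) := by abel
          rw [h', hq3, hq1]; abel
        have e6 : u3 + (v4 - v3) ∈ A := by
          have h' : u3 + (v4 - v3) = v4 + (u3 - v3) := by abel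
          rw [h', hq3, ← hq4]
          have e : v4 + (u4 - v4) = u4 := by abel
          rw [e]; exact hu4
        simp only [Finset.mem_coe, Finset.mem_filter, Finset.mem_product, hJ']
        and_intros <;> first | rfl | trivial | exact e5 | assumption
      · rintro ⟨⟨s, d, e⟩, ⟨a, b⟩, a2, b2⟩ (hx : _ ∈ (_ : Finset _))
        simp only [Finset.mem_filter, Finset.mem_product] at hx
        obtain ⟨-, ⟨hab, -, -⟩, -⟩ := hx
        simp only [Prod.mk.injEq]
        and_intros <;> first | rfl | trivial | exact hab | abel
      · rintro ⟨x, ⟨⟨u1, v1⟩, u2, v2⟩, ⟨u3, v3⟩, u4, v4⟩ (hy : _ ∈ (_ : Finset _))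
        simp only [Finset.mem_filter, Finset.mem_product] at hy
        obtain ⟨-, ⟨hq1, hq2⟩, hq3, hq4⟩ := hy
        have e4 : v1 - (u1 - u2) = v2 := by
          have h' : v1 - (u1 - u2) = u2 - (u1 - v1) := by abel
          rw [h', hq1, ← hq2]; abel
        have e6 : u3 + (v4 - v3) = u4 := by
          have h' : u3 + (v4 - v3) = v4 + (u3 - v3) := by abel
          rw [h', hq3, ← hq4]; abel
        simp only [Prod.mk.injEq]
        and_intros <;> first | rfl | trivial | exact hq1 | exact e4 | exact e6 | abel
    exact h1.trans_eq h2
  -- Cauchy–Schwarz chains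
  have cs1 : σ ^ 2 ≤ A.card * ∑ a ∈ A, f a ^ 2 := by
    rw [step1]; exact nat_cs_one A f
  have cs2 : (∑ z ∈ A ×ˢ A, w z) ^ 2 ≤ A.card ^ 2 * ∑ z ∈ A ×ˢ A, w z ^ 2 := by
    have := nat_cs_one (A ×ˢ A) w
    rwa [Finset.card_product, ← sq] at this
  have cs3 : (∑ j ∈ J.filter X, c j) ^ 2 ≤ E4 * E2 := by
    have h := nat_cs_one (J.filter X) c
    have h8 : ∑ j ∈ J.filter X, c j ^ 2 ≤ E4 :=
      (Finset.sum_le_sum_of_subset (Finset.filter_subset X J)).trans step8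
    calc (∑ j ∈ J.filter X, c j) ^ 2
        ≤ (J.filter X).card * ∑ j ∈ J.filter X, c j ^ 2 := h
      _ ≤ E2 * E4 := Nat.mul_le_mul step7 h8
      _ = E4 * E2 := Nat.mul_comm _ _
  -- assemble
  have h4 : σ ^ 4 ≤ A.card ^ 4 * ∑ j ∈ J.filter X, c j := by
    have hq : σ ^ 4 = (σ ^ 2) ^ 2 := by ring
    rw [hq]
    calc (σ ^ 2) ^ 2 ≤ (A.card * ∑ a ∈ A, f a ^ 2) ^ 2 := Nat.pow_le_pow_left cs1 2
      _ = A.card ^ 2 * (∑ z ∈ A ×ˢ A, w z) ^ 2 := by rw [step3]; ring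
      _ ≤ A.card ^ 2 * (A.card ^ 2 * ∑ z ∈ A ×ˢ A, w z ^ 2) :=
          Nat.mul_le_mul_left _ cs2
      _ = A.card ^ 4 * ∑ j ∈ J.filter X, c j := by rw [step5]; ring
  calc σ ^ 8 = (σ ^ 4) ^ 2 := by ring
    _ ≤ (A.card ^ 4 * ∑ j ∈ J.filter X, c j) ^ 2 := Nat.pow_le_pow_left h4 2
    _ = A.card ^ 8 * (∑ j ∈ J.filter X, c j) ^ 2 := by ring
    _ ≤ A.card ^ 8 * (E4 * E2) := Nat.mul_le_mul_left _ cs3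
    _ = A.card ^ 8 * E4 * E2 := by ring
end

section
/- For any finite subset A ⊆ F_p, |A|^8 / |A-A| ≪ E_3^+(A) · E^+(A, A-A), where E_3^+(A) = ∑_x r_{A-A}(x)^3 and E^+(A, A-A) is the additive energy between A and A-A. -/
set_option maxHeartbeats 1000000

open Pointwise Finset

section KRhelpers
variable {G : Type*} [AddCommGroup G] [DecidableEq G]

private def dc (A B : Finset G) (x : G) : ℕ :=
  ((A ×ˢ B).filter (fun p => p.1 - p.2 = x)).card

private def Bw (A : Finset G) (w : G) : Finset G := A.filter (fun b => b + w ∈ A)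

private lemma sum_dc (A B : Finset G) :
    ∑ x ∈ A - B, dc A B x = A.card * B.card := by
  rw [← Finset.card_product]
  exact (Finset.card_eq_sum_card_fiberwise (fun p hp => by
    rw [Finset.mem_coe, Finset.mem_product] at hp
    exact Finset.sub_mem_sub hp.1 hp.2)).symm

private lemma energy_eq (A B : Finset G) :
    (((A ×ˢ B) ×ˢ (A ×ˢ B)).filter
        (fun t => t.1.1 - t.1.2 = t.2.1 - t.2.2)).card
      = ∑ y ∈ A - B, (dc A B y) ^ 2 := by
  have hmem : ∀ t ∈ ((A ×ˢ B) ×ˢ (A ×ˢ B)).filter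
      (fun t : (G × G) × (G × G) => t.1.1 - t.1.2 = t.2.1 - t.2.2),
      t.1.1 - t.1.2 ∈ A - B := by
    intro t ht
    simp only [mem_filter, mem_product] at ht
    exact sub_mem_sub ht.1.1.1 ht.1.1.2
  rw [Finset.card_eq_sum_card_fiberwise hmem]
  refine Finset.sum_congr rfl (fun y hy => ?_)
  rw [Finset.filter_filter]
  have : (((A ×ˢ B) ×ˢ (A ×ˢ B)).filter
      (fun t : (G × G) × (G × G) => (t.1.1 - t.1.2 = t.2.1 - t.2.2) ∧ t.1.1 - t.1.2 = y))
      = ((A ×ˢ B).filter (fun p => p.1 - p.2 = y)) ×ˢ ((A ×ˢ B).filter (fun p => p.1 - p.2 = y)) := by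
    ext ⟨p, q⟩
    simp only [mem_filter, mem_product]
    constructor
    · rintro ⟨⟨hp, hq⟩, heq, hy2⟩
      exact ⟨⟨hp, hy2⟩, hq, heq.symm.trans hy2⟩
    · rintro ⟨⟨hp, h1⟩, hq, h2⟩
      exact ⟨⟨hp, hq⟩, h1.trans h2.symm, h1⟩
  rw [this, Finset.card_product, dc, sq]

private lemma cs_energy (A B : Finset G) :
    ((A.card : ℝ) * (B.card : ℝ)) ^ 2 ≤ ((A - B).card : ℝ) *
      ((((A ×ˢ B) ×ˢ (A ×ˢ B)).filter
        (fun t => t.1.1 - t.1.2 = t.2.1 - t.2.2)).card : ℝ) := by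
  rw [energy_eq]
  have h1 : ((A.card : ℝ) * (B.card : ℝ)) = ∑ y ∈ A - B, (dc A B y : ℝ) := by
    rw [← Nat.cast_mul, ← sum_dc A B]
    push_cast
    rfl
  rw [h1]
  push_cast
  have := Finset.sum_mul_sq_le_sq_mul_sq (A - B) (fun _ => (1 : ℝ)) (fun y => (dc A B y : ℝ))
  simp only [one_pow, one_mul, Finset.sum_const, nsmul_eq_mul, mul_one] at this
  exact this

private lemma triple_eq (A : Finset G) :
    ((((A ×ˢ A) ×ˢ (A ×ˢ A)) ×ˢ (A ×ˢ A)).filter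
        (fun t => t.1.1.1 - t.1.1.2 = t.1.2.1 - t.1.2.2 ∧ t.1.1.1 - t.1.1.2 = t.2.1 - t.2.2)).card
      = ∑ x ∈ A - A, (dc A A x) ^ 3 := by
  have hmem : ∀ t ∈ (((A ×ˢ A) ×ˢ (A ×ˢ A)) ×ˢ (A ×ˢ A)).filter
      (fun t : ((G × G) × (G × G)) × (G × G) =>
        t.1.1.1 - t.1.1.2 = t.1.2.1 - t.1.2.2 ∧ t.1.1.1 - t.1.1.2 = t.2.1 - t.2.2),
      t.1.1.1 - t.1.1.2 ∈ A - A := by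
    intro t ht
    simp only [mem_filter, mem_product] at ht
    exact sub_mem_sub ht.1.1.1.1 ht.1.1.1.2
  rw [Finset.card_eq_sum_card_fiberwise hmem]
  refine Finset.sum_congr rfl (fun y hy => ?_)
  rw [Finset.filter_filter]
  have : ((((A ×ˢ A) ×ˢ (A ×ˢ A)) ×ˢ (A ×ˢ A)).filter
      (fun t : ((G × G) × (G × G)) × (G × G) =>
        (t.1.1.1 - t.1.1.2 = t.1.2.1 - t.1.2.2 ∧ t.1.1.1 - t.1.1.2 = t.2.1 - t.2.2)
          ∧ t.1.1.1 - t.1.1.2 = y))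
      = (((A ×ˢ A).filter (fun p => p.1 - p.2 = y)) ×ˢ ((A ×ˢ A).filter (fun p => p.1 - p.2 = y)))
          ×ˢ ((A ×ˢ A).filter (fun p => p.1 - p.2 = y)) := by
    ext ⟨⟨p, q⟩, r⟩
    simp only [mem_filter, mem_product]
    constructor
    · rintro ⟨⟨⟨hp, hq⟩, hr⟩, ⟨h1, h2⟩, h3⟩
      exact ⟨⟨⟨hp, h3⟩, hq, h1.symm.trans h3⟩, hr, h2.symm.trans h3⟩
    · rintro ⟨⟨⟨hp, h1⟩, hq, h2⟩, hr, h3⟩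
      exact ⟨⟨⟨hp, hq⟩, hr⟩, ⟨h1.trans h2.symm, h1.trans h3.symm⟩, h1⟩
  rw [this, Finset.card_product, Finset.card_product, dc]
  ring

private lemma card_Bw (A : Finset G) (w : G) :
    (Bw A w).card = dc A A w := by
  apply Finset.card_bij (fun b _ => (b + w, b))
  · intro b hb
    simp only [Bw, mem_filter] at hb
    simp only [mem_filter, mem_product]
    exact ⟨⟨hb.2, hb.1⟩, by abel⟩
  · intro b hb b' hb' h
    exact (Prod.mk.injEq _ _ _ _ ▸ h : _ ∧ _).2
  · intro p hp
    simp only [mem_filter, mem_product] at hp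
    have hkey : p.2 + w = p.1 := by rw [← hp.2]; abel
    refine ⟨p.2, ?_, ?_⟩
    · simp only [Bw, mem_filter]
      exact ⟨hp.1.2, by rw [hkey]; exact hp.1.1⟩
    · rw [hkey]

private lemma e3_inj (A : Finset G) :
    ((A - A).sigma (fun w => ((A ×ˢ Bw A w) ×ˢ (A ×ˢ Bw A w)).filter
        (fun t => t.1.1 - t.1.2 = t.2.1 - t.2.2))).card
      ≤ ((((A ×ˢ A) ×ˢ (A ×ˢ A)) ×ˢ (A ×ˢ A)).filter
        (fun t => t.1.1.1 - t.1.1.2 = t.1.2.1 - t.1.2.2 ∧ t.1.1.1 - t.1.1.2 = t.2.1 - t.2.2)).card := by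
  apply Finset.card_le_card_of_injOn
    (fun z => (((z.2.1.1, z.2.2.1), (z.2.1.2, z.2.2.2)), (z.2.1.2 + z.1, z.2.2.2 + z.1)))
  · rintro ⟨w, ⟨⟨a, b⟩, ⟨a', b'⟩⟩⟩ hz
    simp only [Finset.mem_coe, Finset.mem_sigma, mem_filter, mem_product, Bw] at hz
    obtain ⟨hw, ⟨⟨ha, hb, hbw⟩, ⟨ha', hb', hbw'⟩⟩, heq⟩ := hz
    simp only [Finset.mem_coe, mem_filter, mem_product]
    refine ⟨⟨⟨⟨ha, ha'⟩, hb, hb'⟩, hbw, hbw'⟩, ?_, ?_⟩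
    · exact sub_eq_sub_iff_sub_eq_sub.mp heq
    · have h1 : a - a' = b - b' := sub_eq_sub_iff_sub_eq_sub.mp heq
      have h2 : (b + w) - (b' + w) = b - b' := by abel
      rw [h2]; exact h1
  · rintro ⟨w, ⟨⟨a, b⟩, ⟨a', b'⟩⟩⟩ h1 ⟨w2, ⟨⟨a2, b2⟩, ⟨a2', b2'⟩⟩⟩ h2 heq
    have ha : a = a2 := congrArg (fun t => t.1.1.1) heq
    have ha' : a' = a2' := congrArg (fun t => t.1.1.2) heq
    have hb : b = b2 := congrArg (fun t => t.1.2.1) heq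
    have hb' : b' = b2' := congrArg (fun t => t.1.2.2) heq
    have hbw : b + w = b2 + w2 := congrArg (fun t => t.2.1) heq
    have hw : w = w2 := by
      rw [hb] at hbw
      exact add_left_cancel hbw
    subst ha; subst ha'; subst hb; subst hb'; subst hw
    rfl

private lemma energy_inj (A : Finset G) :
    ((A - A).sigma (fun w =>
        ((A ×ˢ A).filter (fun p => p.1 - p.2 = w)) ×ˢ (A - Bw A w))).card
      ≤ (((A ×ˢ (A - A)) ×ˢ (A ×ˢ (A - A))).filter
          (fun t => t.1.1 - t.1.2 = t.2.1 - t.2.2)).card := by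
  apply Finset.card_le_card_of_injOn
    (fun z => ((z.2.1.1, z.2.2), (z.2.1.2, z.2.2 - z.1)))
  · rintro ⟨w, ⟨⟨α, β⟩, e⟩⟩ hz
    simp only [Finset.mem_coe, Finset.mem_sigma, mem_filter, mem_product] at hz
    obtain ⟨hw, ⟨⟨hα, hβ⟩, hd⟩, he⟩ := hz
    simp only [Finset.mem_coe, mem_filter, mem_product]
    have heD : e ∈ A - A := by
      refine Finset.sub_subset_sub (Finset.Subset.refl A) ?_ he
      exact Finset.filter_subset _ A
    have hewD : e - w ∈ A - A := by
      rw [Finset.mem_sub] at he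
      obtain ⟨x, hx, b, hbmem, hxb⟩ := he
      simp only [Bw, mem_filter] at hbmem
      have : e - w = x - (b + w) := by rw [← hxb]; abel
      rw [this]
      exact Finset.sub_mem_sub hx hbmem.2
    refine ⟨⟨⟨hα, heD⟩, hβ, hewD⟩, ?_⟩
    rw [← hd]; abel
  · rintro ⟨w, ⟨⟨α, β⟩, e⟩⟩ h1 ⟨w2, ⟨⟨α2, β2⟩, e2⟩⟩ h2 heq
    have hα : α = α2 := congrArg (fun t => t.1.1) heq
    have he : e = e2 := congrArg (fun t => t.1.2) heq
    have hβ : β = β2 := congrArg (fun t => t.2.1) heq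
    simp only [Finset.mem_coe, Finset.mem_sigma, mem_filter, mem_product] at h1 h2
    have hw : w = w2 := by rw [← h1.2.1.2, ← h2.2.1.2, hα, hβ]
    subst hα; subst hβ; subst he; subst hw
    rfl

private lemma main_ineq (A : Finset G) (hA : A.Nonempty) :
    (A.card : ℝ) ^ 8 / ((A - A).card : ℝ) ≤
      (∑ x ∈ A - A, (((A ×ˢ A).filter (fun q => q.1 - q.2 = x)).card : ℝ) ^ 3)
        * ((((A ×ˢ (A - A)) ×ˢ (A ×ˢ (A - A))).filter
            (fun q => q.1.1 - q.1.2 = q.2.1 - q.2.2)).card : ℝ) := by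
  classical
  have hDne : (A - A).Nonempty := hA.sub hA
  have hn0 : (0:ℝ) < (A.card : ℝ) := by exact_mod_cast Finset.card_pos.mpr hA
  have hd0 : (0:ℝ) < ((A - A).card : ℝ) := by exact_mod_cast Finset.card_pos.mpr hDne
  set n : ℝ := (A.card : ℝ) with hn
  set d : ℝ := ((A - A).card : ℝ) with hd
  set qr : G → ℝ := fun w => (dc A A w : ℝ) with hqr
  set mr : G → ℝ := fun w => ((A - Bw A w).card : ℝ) with hmr
  set Qr : G → ℝ := fun w => ((((A ×ˢ Bw A w) ×ˢ (A ×ˢ Bw A w)).filter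
      (fun t => t.1.1 - t.1.2 = t.2.1 - t.2.2)).card : ℝ) with hQrdef
  have hgoal3 : (∑ x ∈ A - A, (((A ×ˢ A).filter (fun q => q.1 - q.2 = x)).card : ℝ) ^ 3)
      = ∑ x ∈ A - A, qr x ^ 3 := rfl
  rw [hgoal3]
  set E3 : ℝ := ∑ x ∈ A - A, qr x ^ 3 with hE3def
  set E : ℝ := ((((A ×ˢ (A - A)) ×ˢ (A ×ˢ (A - A))).filter
      (fun q : (G × G) × (G × G) => q.1.1 - q.1.2 = q.2.1 - q.2.2)).card : ℝ) with hEdef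
  -- basic positivity
  have hq0 : ∀ w, 0 ≤ qr w := fun w => Nat.cast_nonneg _
  have hm0 : ∀ w, 0 ≤ mr w := fun w => Nat.cast_nonneg _
  have hE0 : 0 ≤ E := Nat.cast_nonneg _
  have hE30 : 0 ≤ E3 := Finset.sum_nonneg (fun w _ => by positivity)
  have hq1 : ∀ w ∈ A - A, 1 ≤ qr w := by
    intro w hw
    rw [Finset.mem_sub] at hw
    obtain ⟨a, ha, b, hb, hab⟩ := hw
    have h2 : 0 < dc A A w := Finset.card_pos.mpr ⟨(a, b), by
      simp only [mem_filter, mem_product]; exact ⟨⟨ha, hb⟩, hab⟩⟩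
    simp only [hqr]
    exact_mod_cast h2
  have hm1 : ∀ w ∈ A - A, 1 ≤ mr w := by
    intro w hw
    have hBne : (Bw A w).Nonempty := by
      rw [← Finset.card_pos, card_Bw]
      have := hq1 w hw
      have : (1:ℝ) ≤ (dc A A w : ℝ) := this
      exact_mod_cast (by exact_mod_cast this : 1 ≤ dc A A w)
    have h3 : (A - Bw A w).Nonempty := hA.sub hBne
    have h4 := Finset.card_pos.mpr h3
    simp only [hmr]
    exact_mod_cast h4
  -- sum of qr
  have hS1 : ∑ w ∈ A - A, qr w = n ^ 2 := by
    simp only [hqr]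
    rw [← Nat.cast_sum, sum_dc A A]
    push_cast [hn]
    ring
  -- per-w Cauchy-Schwarz
  have hcs : ∀ w ∈ A - A, (n * qr w) ^ 2 ≤ mr w * Qr w := by
    intro w _
    have h := cs_energy A (Bw A w)
    have hcard : ((Bw A w).card : ℝ) = qr w := by
      rw [card_Bw]
    rw [hcard] at h
    exact h
  -- E3 bound
  have hE3ge : ∑ w ∈ A - A, Qr w ≤ E3 := by
    have hnat : ((A - A).sigma (fun w => ((A ×ˢ Bw A w) ×ˢ (A ×ˢ Bw A w)).filter
        (fun t => t.1.1 - t.1.2 = t.2.1 - t.2.2))).card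
        ≤ ∑ x ∈ A - A, (dc A A x) ^ 3 := by
      rw [← triple_eq]
      exact e3_inj A
    rw [Finset.card_sigma] at hnat
    simp only [hQrdef, hE3def, hqr]
    exact_mod_cast hnat
  -- E bound
  have hEge : ∑ w ∈ A - A, qr w * mr w ≤ E := by
    have hnat := energy_inj A
    rw [Finset.card_sigma] at hnat
    have hterm : ∀ w ∈ A - A, (((A ×ˢ A).filter (fun p => p.1 - p.2 = w)) ×ˢ (A - Bw A w)).card
        = dc A A w * (A - Bw A w).card := by
      intro w _
      rw [Finset.card_product, dc]
    rw [Finset.sum_congr rfl hterm] at hnat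
    simp only [hqr, hmr, hEdef]
    exact_mod_cast hnat
  -- real analysis part
  set u : G → ℝ := fun w => Real.sqrt (qr w) with hu
  have hu0 : ∀ w, 0 ≤ u w := fun w => Real.sqrt_nonneg _
  have huu : ∀ w, u w * u w = qr w := fun w => Real.mul_self_sqrt (hq0 w)
  set S2 : ℝ := ∑ w ∈ A - A, qr w * u w with hS2
  set S3 : ℝ := ∑ w ∈ A - A, u w with hS3
  have hS20 : 0 ≤ S2 := Finset.sum_nonneg (fun w _ => mul_nonneg (hq0 w) (hu0 w))
  have hS30 : 0 ≤ S3 := Finset.sum_nonneg (fun w _ => hu0 w)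
  -- CS-b : (n^2)^2 ≤ S2 * S3
  have csb : (n ^ 2) ^ 2 ≤ S2 * S3 := by
    have h := Finset.sum_mul_sq_le_sq_mul_sq (A - A)
      (fun w => Real.sqrt (qr w * u w)) (fun w => Real.sqrt (u w))
    have e1 : ∑ w ∈ A - A, Real.sqrt (qr w * u w) * Real.sqrt (u w) = ∑ w ∈ A - A, qr w := by
      refine Finset.sum_congr rfl (fun w _ => ?_)
      rw [← Real.sqrt_mul (mul_nonneg (hq0 w) (hu0 w)), mul_assoc, huu w,
        Real.sqrt_mul_self (hq0 w)]
    have e2 : ∑ w ∈ A - A, Real.sqrt (qr w * u w) ^ 2 = S2 := by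
      refine Finset.sum_congr rfl (fun w _ => ?_)
      exact Real.sq_sqrt (mul_nonneg (hq0 w) (hu0 w))
    have e3 : ∑ w ∈ A - A, Real.sqrt (u w) ^ 2 = S3 := by
      refine Finset.sum_congr rfl (fun w _ => ?_)
      exact Real.sq_sqrt (hu0 w)
    rw [e1, e2, e3, hS1] at h
    exact h
  -- CS-c : S3^2 ≤ d * n^2
  have csc : S3 ^ 2 ≤ d * n ^ 2 := by
    have h := Finset.sum_mul_sq_le_sq_mul_sq (A - A) (fun _ => (1:ℝ)) u
    simp only [one_pow, one_mul, Finset.sum_const, nsmul_eq_mul, mul_one] at h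
    have e1 : ∑ w ∈ A - A, u w ^ 2 = n ^ 2 := by
      rw [← hS1]
      refine Finset.sum_congr rfl (fun w _ => ?_)
      rw [sq, huu w]
    rw [e1] at h
    exact h
  -- CS-a : S2^2 ≤ (E3 / n^2) * E
  have csa : S2 ^ 2 ≤ (E3 / n ^ 2) * E := by
    have h := Finset.sum_mul_sq_le_sq_mul_sq (A - A)
      (fun w => qr w / Real.sqrt (mr w)) (fun w => u w * Real.sqrt (mr w))
    have e1 : ∑ w ∈ A - A, (qr w / Real.sqrt (mr w)) * (u w * Real.sqrt (mr w)) = S2 := by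
      refine Finset.sum_congr rfl (fun w hw => ?_)
      have hm : (0:ℝ) < Real.sqrt (mr w) := Real.sqrt_pos.mpr (lt_of_lt_of_le one_pos (hm1 w hw))
      field_simp
    have e2 : ∑ w ∈ A - A, (qr w / Real.sqrt (mr w)) ^ 2 ≤ E3 / n ^ 2 := by
      have hterm : ∀ w ∈ A - A, (qr w / Real.sqrt (mr w)) ^ 2 ≤ Qr w / n ^ 2 := by
        intro w hw
        have hmpos : (0:ℝ) < mr w := lt_of_lt_of_le one_pos (hm1 w hw)
        rw [div_pow, Real.sq_sqrt (hm0 w)]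
        rw [div_le_div_iff₀ hmpos (by positivity)]
        have := hcs w hw
        nlinarith [this]
      calc ∑ w ∈ A - A, (qr w / Real.sqrt (mr w)) ^ 2
          ≤ ∑ w ∈ A - A, Qr w / n ^ 2 := Finset.sum_le_sum hterm
        _ = (∑ w ∈ A - A, Qr w) / n ^ 2 := by rw [Finset.sum_div]
        _ ≤ E3 / n ^ 2 := by
            gcongr
    have e3 : ∑ w ∈ A - A, (u w * Real.sqrt (mr w)) ^ 2 ≤ E := by
      have hterm : ∀ w ∈ A - A, (u w * Real.sqrt (mr w)) ^ 2 = qr w * mr w := by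
        intro w _
        rw [mul_pow, Real.sq_sqrt (hm0 w), sq, huu w]
      rw [Finset.sum_congr rfl hterm]
      exact hEge
    rw [e1] at h
    calc S2 ^ 2 ≤ (∑ w ∈ A - A, (qr w / Real.sqrt (mr w)) ^ 2)
          * (∑ w ∈ A - A, (u w * Real.sqrt (mr w)) ^ 2) := h
      _ ≤ (E3 / n ^ 2) * E := by
          apply mul_le_mul e2 e3 (Finset.sum_nonneg (fun w _ => sq_nonneg _)) (by positivity)
  -- combine
  have h8 : n ^ 8 ≤ E3 * E * d := by
    have hp1 : ((n ^ 2) ^ 2) ^ 2 ≤ (S2 * S3) ^ 2 := by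
      apply pow_le_pow_left₀ (by positivity) csb
    have hp2 : (S2 * S3) ^ 2 = S2 ^ 2 * S3 ^ 2 := by ring
    have hp3 : S2 ^ 2 * S3 ^ 2 ≤ ((E3 / n ^ 2) * E) * (d * n ^ 2) := by
      apply mul_le_mul csa csc (sq_nonneg _)
      positivity
    have hp4 : ((E3 / n ^ 2) * E) * (d * n ^ 2) = E3 * E * d := by
      field_simp
    nlinarith [hp1, hp3]
  rw [div_le_iff₀ hd0]
  linarith [h8]

end KRhelpers

theorem stmt_13 :
    ∃ C : ℝ, 0 < C ∧
      ∀ (p : ℕ), p.Prime →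
        ∀ (A : Finset (ZMod p)), A.Nonempty →
          (A.card : ℝ) ^ 8 / ((A - A).card : ℝ) ≤
            C * (∑ x ∈ A - A, (((A ×ˢ A).filter (fun q => q.1 - q.2 = x)).card : ℝ) ^ 3)
              * ((((A ×ˢ (A - A)) ×ˢ (A ×ˢ (A - A))).filter
                  (fun q => q.1.1 - q.1.2 = q.2.1 - q.2.2)).card : ℝ) := by
  refine ⟨1, one_pos, fun p hp A hA => ?_⟩
  rw [one_mul]
  exact main_ineq A hA
end
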